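/- Let I be a fuzzy ideal of a fuzzy Riesz space X. Then: (i) I^{dd} is the largest fuzzy ideal J of X with the property that for every nonzero x ∈ J there exists a nonzero y ∈ I such that μ(|y|,|x|) > 1/2; (ii) I^d = {0} if and only if for every nonzero x ∈ X there exists a nonzero y ∈ I such that μ(|y|,|x|) > 1/2. -/

import Mathlib

/-!
The relation `μ(x, y) > 1/2` is a lattice order on `X`, with join `F.sup` and meet `F.inf`,
compatible with addition and nonnegative scaling. For this vector lattice structure (`F.Crisp`)
`F.fabs`, `F.dcomp`, fuzzy solidity and `μ(|y|, |x|) > 1/2` are the usual absolute value, disjoint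
complement, solidity and `|y| ≤ |x|`, and the theorem rests on two observations. If `x ∉ I^d`,
some `w ∈ I` gives `z = |x| ∧ |w| ≠ 0`, which lies in `I` by solidity and satisfies `|z| ≤ |x|`.
And `y ∈ A` with `|y| ≤ |w|` for some `w ∈ A^d` vanishes, since `|y| = |y| ∧ |w| = 0`.
-/

/-- A fuzzy Riesz space structure on a real vector space `X`:
a fuzzy order `μ : X × X → [0,1]` compatible with the vector structure,
together with binary suprema and infima with respect to the fuzzy order. -/
structure FuzzyRiesz (X : Type*) [AddCommGroup X] [Module ℝ X] where
  μ : X → X → ℝ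
  nonneg : ∀ x y : X, 0 ≤ μ x y
  le_one : ∀ x y : X, μ x y ≤ 1
  refl : ∀ x : X, μ x x = 1
  antisymm : ∀ x y : X, 1 < μ x y + μ y x → x = y
  trans : ∀ x y z : X, min (μ x y) (μ y z) ≤ μ x z
  add_compat : ∀ x y z : X, 1/2 < μ x y → μ x y ≤ μ (x + z) (y + z)
  smul_compat : ∀ (x y : X) (c : ℝ), 0 ≤ c → 1/2 < μ x y → μ x y ≤ μ (c • x) (c • y)
  sup : X → X → X
  inf : X → X → X
  le_sup_left : ∀ x y : X, 1/2 < μ x (sup x y)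
  le_sup_right : ∀ x y : X, 1/2 < μ y (sup x y)
  sup_le : ∀ x y z : X, 1/2 < μ x z → 1/2 < μ y z → 1/2 < μ (sup x y) z
  inf_le_left : ∀ x y : X, 1/2 < μ (inf x y) x
  inf_le_right : ∀ x y : X, 1/2 < μ (inf x y) y
  le_inf : ∀ x y z : X, 1/2 < μ z x → 1/2 < μ z y → 1/2 < μ z (inf x y)

namespace FuzzyRiesz

universe v

variable {X : Type*} [AddCommGroup X] [Module ℝ X]

/-- The absolute value `|x| = x ∨ (−x)`. -/
def fabs (F : FuzzyRiesz X) (x : X) : X := F.sup x (-x)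

/-- `x` is positive: `μ(0,x) > 1/2`. -/
def Pos (F : FuzzyRiesz X) (x : X) : Prop := 1/2 < F.μ 0 x

/-- `S⁺`, the set of positive elements of `S`. -/
def posPart (F : FuzzyRiesz X) (S : Set X) : Set X := {x ∈ S | F.Pos x}

/-- `y` is an upper bound of `A`. -/
def UpperBound (F : FuzzyRiesz X) (A : Set X) (y : X) : Prop := ∀ x ∈ A, 1/2 < F.μ x y

/-- `y` is a lower bound of `A`. -/
def LowerBound (F : FuzzyRiesz X) (A : Set X) (y : X) : Prop := ∀ x ∈ A, 1/2 < F.μ y x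

/-- `z = sup A` in the fuzzy order. -/
def IsSup (F : FuzzyRiesz X) (A : Set X) (z : X) : Prop :=
  F.UpperBound A z ∧ ∀ y : X, F.UpperBound A y → 1/2 < F.μ z y

/-- `z = inf A` in the fuzzy order. -/
def IsInf (F : FuzzyRiesz X) (A : Set X) (z : X) : Prop :=
  F.LowerBound A z ∧ ∀ y : X, F.LowerBound A y → 1/2 < F.μ y z

/-- `z = inf A`, computed relative to the subset `Y` (lower bounds taken in `Y`). -/
def IsInfIn (F : FuzzyRiesz X) (Y A : Set X) (z : X) : Prop :=
  F.LowerBound A z ∧ ∀ y ∈ Y, F.LowerBound A y → 1/2 < F.μ y z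

/-- A set is fuzzy solid if `μ(|x|,|y|) > 1/2` and `y ∈ A` imply `x ∈ A`. -/
def Solid (F : FuzzyRiesz X) (A : Set X) : Prop :=
  ∀ x y : X, 1/2 < F.μ (F.fabs x) (F.fabs y) → y ∈ A → x ∈ A

/-- A fuzzy ideal: a fuzzy solid vector subspace. -/
structure IsIdeal (F : FuzzyRiesz X) (I : Set X) : Prop where
  zero_mem : (0 : X) ∈ I
  add_mem : ∀ {x y : X}, x ∈ I → y ∈ I → x + y ∈ I
  smul_mem : ∀ (c : ℝ) {x : X}, x ∈ I → c • x ∈ I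
  solid : ∀ x y : X, 1/2 < F.μ (F.fabs x) (F.fabs y) → y ∈ I → x ∈ I

/-- A fuzzy ideal of the subspace `Y` (with the restricted fuzzy order and
vector structure): a vector subspace of `Y` that is solid relative to `Y`. -/
structure IsIdealIn (F : FuzzyRiesz X) (Y I : Set X) : Prop where
  subset : I ⊆ Y
  zero_mem : (0 : X) ∈ I
  add_mem : ∀ {x y : X}, x ∈ I → y ∈ I → x + y ∈ I
  smul_mem : ∀ (c : ℝ) {x : X}, x ∈ I → c • x ∈ I
  solid : ∀ x ∈ Y, ∀ y ∈ I, 1/2 < F.μ (F.fabs x) (F.fabs y) → x ∈ I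

/-- A decreasing net. -/
def Decreasing (F : FuzzyRiesz X) {ι : Type v} [Preorder ι] (y : ι → X) : Prop :=
  ∀ a b : ι, a ≤ b → 1/2 < F.μ (y b) (y a)

/-- An increasing net. -/
def Increasing (F : FuzzyRiesz X) {ι : Type v} [Preorder ι] (x : ι → X) : Prop :=
  ∀ a b : ι, a ≤ b → 1/2 < F.μ (x a) (x b)

/-- The net `x` converges in fuzzy order to `l`: there is a net `y` over the same
index set with `μ(|x_α − l|, y_α) > 1/2` for all `α` and `y_α ↓ 0`. -/
def FuzzyOrderConv (F : FuzzyRiesz X) {ι : Type v} [Preorder ι] (x : ι → X) (l : X) : Prop :=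
  ∃ y : ι → X, (∀ a, 1/2 < F.μ (F.fabs (x a - l)) (y a)) ∧ F.Decreasing y ∧
    F.IsInf (Set.range y) 0

/-- Fuzzy order convergence relative to the subset `Y` (the dominating net lies in `Y`
and its infimum is computed in `Y`). -/
def FuzzyOrderConvIn (F : FuzzyRiesz X) (Y : Set X) {ι : Type v} [Preorder ι]
    (x : ι → X) (l : X) : Prop :=
  ∃ y : ι → X, (∀ a, y a ∈ Y) ∧ (∀ a, 1/2 < F.μ (F.fabs (x a - l)) (y a)) ∧ F.Decreasing y ∧
    F.IsInfIn Y (Set.range y) 0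

/-- `S` is fuzzy σ-order closed: closed under fuzzy order limits of sequences in `S`. -/
def SigmaOrderClosed (F : FuzzyRiesz X) (S : Set X) : Prop :=
  ∀ (x : ℕ → X) (l : X), (∀ n, x n ∈ S) → F.FuzzyOrderConv x l → l ∈ S

/-- `S` is fuzzy order closed: closed under fuzzy order limits of nets in `S`. -/
def OrderClosed (F : FuzzyRiesz X) (S : Set X) : Prop :=
  ∀ (ι : Type v) [Preorder ι] [Nonempty ι] [IsDirected ι (· ≤ ·)],
    ∀ (x : ι → X) (l : X), (∀ a, x a ∈ S) → F.FuzzyOrderConv x l → l ∈ S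

/-- `S` is fuzzy order closed in the subspace `Y`. -/
def OrderClosedIn (F : FuzzyRiesz X) (Y S : Set X) : Prop :=
  ∀ (ι : Type v) [Preorder ι] [Nonempty ι] [IsDirected ι (· ≤ ·)],
    ∀ (x : ι → X) (l : X), (∀ a, x a ∈ S) → l ∈ Y → F.FuzzyOrderConvIn Y x l → l ∈ S

/-- A fuzzy band: a fuzzy order closed fuzzy ideal. -/
def IsBand (F : FuzzyRiesz X) (B : Set X) : Prop := F.IsIdeal B ∧ OrderClosed.{v} F B

/-- A fuzzy band of the subspace `Y`. -/
def IsBandIn (F : FuzzyRiesz X) (Y B : Set X) : Prop := F.IsIdealIn Y B ∧ OrderClosedIn.{v} F Y B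

/-- The disjoint complement `A^d = {x : |x| ∧ |y| = 0 for all y ∈ A}`. -/
def dcomp (F : FuzzyRiesz X) (A : Set X) : Set X :=
  {x : X | ∀ y ∈ A, F.inf (F.fabs x) (F.fabs y) = 0}

/-- The algebraic sum of two subsets. -/
def sumSet (A B : Set X) : Set X := {z : X | ∃ a ∈ A, ∃ b ∈ B, z = a + b}

/-- `S` is fuzzy order dense in `X`. -/
def OrderDense (F : FuzzyRiesz X) (S : Set X) : Prop :=
  ∀ x : X, x ≠ 0 → F.Pos x → ∃ y ∈ S, y ≠ 0 ∧ 1/2 < F.μ y x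

/-- `S` is fuzzy order dense in the subspace `Y`. -/
def OrderDenseIn (F : FuzzyRiesz X) (Y S : Set X) : Prop :=
  ∀ x ∈ Y, x ≠ 0 → F.Pos x → ∃ y ∈ S, y ≠ 0 ∧ 1/2 < F.μ y x

/-- `x` is nonnegative: it is not the case that `μ(x,0) > 1/2`. -/
def Nonneg (F : FuzzyRiesz X) (x : X) : Prop := ¬ (1/2 < F.μ x 0)

/-- `X` is fuzzy Archimedean: for every nonzero nonnegative `x`, the set
`{λ • x : λ > 0}` has no upper bound. -/
def FuzzyArchimedean (F : FuzzyRiesz X) : Prop :=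
  ∀ x : X, x ≠ 0 → F.Nonneg x →
    ¬ ∃ y : X, F.UpperBound {z : X | ∃ c : ℝ, 0 < c ∧ z = c • x} y

/-- `X` is fuzzy Dedekind complete. -/
def DedekindComplete (F : FuzzyRiesz X) : Prop :=
  ∀ A : Set X, A.Nonempty → (∃ y, F.UpperBound A y) → ∃ z, F.IsSup A z

/-- `X` is fuzzy Dedekind σ-complete. -/
def DedekindSigmaComplete (F : FuzzyRiesz X) : Prop :=
  ∀ A : Set X, A.Nonempty → A.Countable →
    ((∃ y, F.UpperBound A y) → ∃ z, F.IsSup A z) ∧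
    ((∃ y, F.LowerBound A y) → ∃ z, F.IsInf A z)

/-- `D` is directed to the right. -/
def DirectedRight (F : FuzzyRiesz X) (D : Set X) : Prop :=
  ∀ E : Set X, E ⊆ D → E.Finite → ∃ d ∈ D, ∀ e ∈ E, 1/2 < F.μ e d

/-- `B` is a fuzzy projection band: a fuzzy band such that every `x ∈ X` decomposes
uniquely as `x = x₁ + x₂` with `x₁ ∈ B`, `x₂ ∈ B^d`. -/
def IsProjBand (F : FuzzyRiesz X) (B : Set X) : Prop :=
  IsBand.{v} F B ∧ ∀ x : X, ∃! p : X × X, p.1 ∈ B ∧ p.2 ∈ F.dcomp B ∧ x = p.1 + p.2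

/-- There is an increasing net of elements of `S`, over some nonempty directed
preordered index set, whose supremum is `l`. -/
def IncNetSup (F : FuzzyRiesz X) (S : Set X) (l : X) : Prop :=
  ∃ (ι : Type v) (r : ι → ι → Prop), Nonempty ι ∧ (∀ a, r a a) ∧
    (∀ a b c, r a b → r b c → r a c) ∧ (∀ a b, ∃ c, r a c ∧ r b c) ∧
    ∃ net : ι → X, (∀ a, net a ∈ S) ∧ (∀ a b, r a b → 1/2 < F.μ (net a) (net b)) ∧
      F.IsSup (Set.range net) l

end FuzzyRiesz

section LatticeOrderedGroup

variable {E : Type*} [AddCommGroup E] [Lattice E] [AddLeftMono E]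

theorem eq_zero_of_abs_eq_zero {a : E} (h : |a| = 0) : a = 0 :=
  le_antisymm ((le_abs_self a).trans h.le) (neg_nonpos.1 ((neg_le_abs a).trans h.le))

theorem add_inf_le_inf_add_inf {a b c : E} (ha : 0 ≤ a) (hb : 0 ≤ b) (hc : 0 ≤ c) :
    (a + b) ⊓ c ≤ a ⊓ c + b ⊓ c := by
  rw [inf_add, add_inf, add_inf]
  refine le_inf (le_inf inf_le_left ?_) (le_inf ?_ ?_) <;> refine inf_le_right.trans ?_
  · exact le_add_of_nonneg_left ha
  · exact le_add_of_nonneg_right hb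
  · exact le_add_of_nonneg_left hc

end LatticeOrderedGroup

section LatticeOrderedModule

variable {𝕜 E : Type*} [Ring 𝕜] [LinearOrder 𝕜] [IsOrderedRing 𝕜]
  [AddCommGroup E] [Lattice E] [Module 𝕜 E] [PosSMulMono 𝕜 E]

theorem smul_le_abs_smul_abs (t : 𝕜) (x : E) : t • x ≤ |t| • |x| := by
  rcases le_total 0 t with ht | ht
  · rw [abs_of_nonneg ht]
    exact smul_le_smul_of_nonneg_left (le_abs_self x) ht
  · rw [abs_of_nonpos ht, ← neg_smul_neg]
    exact smul_le_smul_of_nonneg_left (neg_le_abs x) (neg_nonneg.2 ht)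

theorem abs_smul_le (t : 𝕜) (x : E) : |t • x| ≤ |t| • |x| :=
  abs_le'.2 ⟨smul_le_abs_smul_abs t x, by simpa [smul_neg] using smul_le_abs_smul_abs t (-x)⟩

end LatticeOrderedModule

section DisjointComplement

variable {E : Type*} [AddCommGroup E] [Lattice E] [AddLeftMono E] {A I J : Set E} {x y : E}

def disjComp (A : Set E) : Set E := {x | ∀ y ∈ A, |x| ⊓ |y| = 0}

theorem abs_abs_inf_abs (a b : E) : |(|a| ⊓ |b|)| = |a| ⊓ |b| :=
  abs_of_nonneg (le_inf (abs_nonneg a) (abs_nonneg b))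

theorem mem_disjComp_iff_le : x ∈ disjComp A ↔ ∀ y ∈ A, |x| ⊓ |y| ≤ 0 :=
  forall₂_congr fun _ _ => (le_inf (abs_nonneg _) (abs_nonneg _)).ge_iff_eq'.symm

theorem zero_mem_disjComp (A : Set E) : 0 ∈ disjComp A :=
  mem_disjComp_iff_le.2 fun _ _ => by rw [abs_zero]; exact inf_le_left

theorem isSolid_disjComp (A : Set E) : LatticeOrderedAddCommGroup.IsSolid (disjComp A) :=
  fun _ hx _ hyx => mem_disjComp_iff_le.2 fun z hz =>
    (inf_le_inf_right _ hyx).trans (mem_disjComp_iff_le.1 hx z hz)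

theorem add_mem_disjComp (hx : x ∈ disjComp A) (hy : y ∈ disjComp A) : x + y ∈ disjComp A :=
  mem_disjComp_iff_le.2 fun z hz => calc
    |x + y| ⊓ |z| ≤ (|x| + |y|) ⊓ |z| := inf_le_inf_right _ (abs_add_le x y)
    _ ≤ |x| ⊓ |z| + |y| ⊓ |z| :=
      add_inf_le_inf_add_inf (abs_nonneg x) (abs_nonneg y) (abs_nonneg z)
    _ = 0 := by rw [hx z hz, hy z hz, add_zero]

theorem smul_mem_disjComp {𝕜 : Type*} [Field 𝕜] [LinearOrder 𝕜] [IsStrictOrderedRing 𝕜]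
    [Module 𝕜 E] [PosSMulMono 𝕜 E] (t : 𝕜) (hx : x ∈ disjComp A) : t • x ∈ disjComp A := by
  refine mem_disjComp_iff_le.2 fun y hy => ?_
  -- Scaling by `|t| + 1 ≥ 1` dominates both `|t • x|` and `|y|`, and it commutes with `⊓`.
  have hs : (0 : 𝕜) < |t| + 1 := by positivity
  have hx' : |t • x| ≤ (|t| + 1) • |x| := (abs_smul_le t x).trans <| by
    rw [add_smul, one_smul]; exact le_add_of_nonneg_right (abs_nonneg x)
  have hy' : |y| ≤ (|t| + 1) • |y| := by
    rw [add_smul, one_smul]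
    exact le_add_of_nonneg_left (smul_nonneg (abs_nonneg t) (abs_nonneg y))
  calc |t • x| ⊓ |y| ≤ (|t| + 1) • |x| ⊓ (|t| + 1) • |y| := inf_le_inf hx' hy'
    _ = (|t| + 1) • (|x| ⊓ |y|) := ((OrderIso.smulRight hs).map_inf _ _).symm
    _ = 0 := by rw [hx y hy, smul_zero]

theorem eq_zero_of_abs_le_of_mem_disjComp (hy : y ∈ A) (hx : x ∈ disjComp A) (hyx : |y| ≤ |x|) :
    y = 0 :=
  eq_zero_of_abs_eq_zero <| by rw [← inf_eq_right.2 hyx]; exact hx y hy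

theorem exists_abs_le_of_notMem_disjComp (hI : LatticeOrderedAddCommGroup.IsSolid I)
    (hx : x ∉ disjComp I) : ∃ y ∈ I, y ≠ 0 ∧ |y| ≤ |x| := by
  simp only [disjComp, Set.mem_ofPred_eq, not_forall] at hx
  obtain ⟨w, hw, hxw⟩ := hx
  have habs := abs_abs_inf_abs x w
  exact ⟨|x| ⊓ |w|, hI hw (habs.trans_le inf_le_right), hxw, habs.trans_le inf_le_left⟩

theorem exists_abs_le_of_mem_disjComp_disjComp (hI : LatticeOrderedAddCommGroup.IsSolid I)
    (hx : x ∈ disjComp (disjComp I)) (hx0 : x ≠ 0) : ∃ y ∈ I, y ≠ 0 ∧ |y| ≤ |x| :=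
  exists_abs_le_of_notMem_disjComp hI fun hxd =>
    hx0 (eq_zero_of_abs_le_of_mem_disjComp hxd hx le_rfl)

theorem subset_disjComp_disjComp (hJ : LatticeOrderedAddCommGroup.IsSolid J)
    (hJI : ∀ x ∈ J, x ≠ 0 → ∃ y ∈ I, y ≠ 0 ∧ |y| ≤ |x|) : J ⊆ disjComp (disjComp I) := by
  intro x hx w hw
  by_contra hxw
  have habs := abs_abs_inf_abs x w
  obtain ⟨y, hy, hy0, hyxw⟩ := hJI _ (hJ hx (habs.trans_le inf_le_left)) hxw
  exact hy0 (eq_zero_of_abs_le_of_mem_disjComp hy hw (hyxw.trans (habs.trans_le inf_le_right)))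

theorem disjComp_eq_zero_iff (hI : LatticeOrderedAddCommGroup.IsSolid I) :
    disjComp I = {0} ↔ ∀ x, x ≠ 0 → ∃ y ∈ I, y ≠ 0 ∧ |y| ≤ |x| := by
  refine ⟨fun h x hx0 => exists_abs_le_of_notMem_disjComp hI (h ▸ hx0), fun h => ?_⟩
  refine Set.eq_singleton_iff_unique_mem.2 ⟨zero_mem_disjComp I, fun x hx => ?_⟩
  by_contra hx0
  obtain ⟨y, hy, hy0, hyx⟩ := h x hx0
  exact hy0 (eq_zero_of_abs_le_of_mem_disjComp hy hx hyx)

end DisjointComplement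

namespace FuzzyRiesz

variable {X : Type*} [AddCommGroup X] [Module ℝ X] {F : FuzzyRiesz X}

def Crisp (_ : FuzzyRiesz X) : Type _ := X

instance : AddCommGroup F.Crisp := inferInstanceAs (AddCommGroup X)

instance : Module ℝ F.Crisp := inferInstanceAs (Module ℝ X)

instance : Lattice F.Crisp where
  le x y := 1/2 < F.μ x y
  le_refl x := show (1 : ℝ) / 2 < F.μ x x by linarith [F.refl x]
  le_trans x y z hxy hyz := (lt_min hxy hyz).trans_le (F.trans x y z)
  le_antisymm x y hxy hyx := F.antisymm x y (by change (1 : ℝ) / 2 < _ at hxy hyx; linarith)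
  sup := F.sup
  le_sup_left := F.le_sup_left
  le_sup_right := F.le_sup_right
  sup_le := F.sup_le
  inf := F.inf
  inf_le_left := F.inf_le_left
  inf_le_right := F.inf_le_right
  le_inf x y z := F.le_inf y z x

instance : AddLeftMono F.Crisp :=
  ⟨fun z x y (hxy : 1/2 < F.μ x y) => show 1/2 < F.μ (z + x) (z + y) by
    rw [add_comm z, add_comm z]; exact hxy.trans_le (F.add_compat x y z hxy)⟩

instance : PosSMulMono ℝ F.Crisp :=
  ⟨fun c hc x y (hxy : 1/2 < F.μ x y) => hxy.trans_le (F.smul_compat x y c hc hxy)⟩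

theorem IsIdeal.isSolid {J : Set X} (hJ : F.IsIdeal J) :
    LatticeOrderedAddCommGroup.IsSolid (α := F.Crisp) J :=
  fun x hx y hyx => hJ.solid y x hyx hx

variable (F) in
theorem isIdeal_dcomp (A : Set X) : F.IsIdeal (F.dcomp A) where
  zero_mem := zero_mem_disjComp (E := F.Crisp) A
  add_mem := add_mem_disjComp (E := F.Crisp)
  smul_mem c _ hx := smul_mem_disjComp (E := F.Crisp) c hx
  solid _ _ hxy hy := isSolid_disjComp (E := F.Crisp) A hy hxy

end FuzzyRiesz

/-- for a fuzzy ideal `I`, (i) `I^{dd}` is the largest fuzzy ideal `J`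
such that every nonzero `x ∈ J` dominates, in absolute value, some nonzero `y ∈ I`;
(ii) `I^d = {0}` iff every nonzero `x ∈ X` dominates some nonzero `y ∈ I`. -/
theorem ddcomp_largest {X : Type*} [AddCommGroup X] [Module ℝ X]
    (F : FuzzyRiesz X) (I : Set X) (hI : F.IsIdeal I) :
    (F.IsIdeal (F.dcomp (F.dcomp I)) ∧
      (∀ x ∈ F.dcomp (F.dcomp I), x ≠ 0 →
        ∃ y ∈ I, y ≠ 0 ∧ 1/2 < F.μ (F.fabs y) (F.fabs x)) ∧
      (∀ J : Set X, F.IsIdeal J →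
        (∀ x ∈ J, x ≠ 0 → ∃ y ∈ I, y ≠ 0 ∧ 1/2 < F.μ (F.fabs y) (F.fabs x)) →
        J ⊆ F.dcomp (F.dcomp I))) ∧
    (F.dcomp I = {0} ↔
      ∀ x : X, x ≠ 0 → ∃ y ∈ I, y ≠ 0 ∧ 1/2 < F.μ (F.fabs y) (F.fabs x)) := by
  have hI' := hI.isSolid
  refine ⟨⟨F.isIdeal_dcomp _, fun x => exists_abs_le_of_mem_disjComp_disjComp hI',
    fun J hJ => subset_disjComp_disjComp hJ.isSolid⟩,
    disjComp_eq_zero_iff hI'⟩
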